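/- In K[x_0,x_1,…,x_5] with K algebraically closed, the ideal I' = (x_1x_3, x_1x_4, x_2x_4, x_2x_5, x_3x_5, x_0x_3, x_0x_4, x_0x_5) satisfies √I' = √(D, x_1^2x_3^2 + x_0x_3, x_1^2x_4^2 + x_2^2x_5^2 + x_0x_4, x_2^2x_4^2 + x_3^2x_5^2 + x_0x_5), where D = x_1^4x_3^3x_4x_5 + x_0x_1^2x_3^2x_4x_5 + x_0x_1^2x_3^3x_5 + x_0^2x_3^2x_5 + x_0x_1^4x_3x_4 + x_0^2x_1^2x_4 + x_0^2x_1^2x_3 − x_1^2x_2^4x_3x_4x_5 − x_0x_2^4x_4x_5. -/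

import Mathlib

open MvPolynomial

private lemma sq_zero {K : Type*} [Field K] {x : K} (h : x ^ 2 = 0) : x = 0 :=
  pow_eq_zero_iff (n := 2) two_ne_zero |>.mp h

private lemma key_forward {K : Type*} [Field K] (a0 a1 a2 a3 a4 a5 : K)
    (h1 : a1^4*a3^3*a4*a5 + a0*a1^2*a3^2*a4*a5 + a0*a1^2*a3^3*a5 + a0^2*a3^2*a5
      + a0*a1^4*a3*a4 + a0^2*a1^2*a4 + a0^2*a1^2*a3 - a1^2*a2^4*a3*a4*a5
      - a0*a2^4*a4*a5 = 0)
    (h2 : a1^2*a3^2 + a0*a3 = 0)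
    (h3 : a1^2*a4^2 + a2^2*a5^2 + a0*a4 = 0)
    (h4 : a2^2*a4^2 + a3^2*a5^2 + a0*a5 = 0) :
    a1*a3 = 0 ∧ a1*a4 = 0 ∧ a2*a4 = 0 ∧ a2*a5 = 0 ∧ a3*a5 = 0 ∧
      a0*a3 = 0 ∧ a0*a4 = 0 ∧ a0*a5 = 0 := by
  rcases eq_or_ne a4 0 with h40 | h40
  · subst h40
    rcases eq_or_ne a5 0 with h50 | h50
    · subst h50
      -- only h2 : a1^2*a3^2 + a0*a3 = 0 and h1 : a0^2*a1^2*a3 = 0 remain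
      have h1' : (a0*a1)^2 * a3 = 0 := by linear_combination h1
      rcases mul_eq_zero.mp h1' with h | h3z
      · rcases mul_eq_zero.mp (sq_zero h) with h0 | ha1
        · subst h0
          have : (a1*a3)^2 = 0 := by linear_combination h2
          exact ⟨sq_zero this, by ring, by ring, by ring, by ring, by ring, by ring, by ring⟩
        · subst ha1
          have h03 : a0*a3 = 0 := by linear_combination h2
          exact ⟨by ring, by ring, by ring, by ring, by ring, h03, by ring, by ring⟩
      · subst h3z
        exact ⟨by ring, by ring, by ring, by ring, by ring, by ring, by ring, by ring⟩
    · -- a4 = 0, a5 ≠ 0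
      have h25 : a2*a5 = 0 := sq_zero (by linear_combination h3)
      have h2z : a2 = 0 := by rcases mul_eq_zero.mp h25 with h | h; exact h; exact absurd h h50
      subst h2z
      have hw : a5 * (a3^2*a5 + a0) = 0 := by linear_combination h4
      have hw' : a3^2*a5 + a0 = 0 := by
        rcases mul_eq_zero.mp hw with h | h; exact absurd h h50; exact h
      have h0 : a0^3 = 0 := by
        linear_combination -h1 + ((a1^2*a3+a0)*(a1^2*0+a0)) * hw'
      have h0z : a0 = 0 := pow_eq_zero_iff (n := 3) three_ne_zero |>.mp h0
      subst h0z
      have h3z : a3 = 0 := by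
        have : a3^2 * a5 = 0 := by linear_combination hw'
        rcases mul_eq_zero.mp this with h | h
        · exact sq_zero h
        · exact absurd h h50
      subst h3z
      exact ⟨by ring, by ring, by ring, by ring, by ring, by ring, by ring, by ring⟩
  · rcases eq_or_ne a5 0 with h50 | h50
    · subst h50
      -- a4 ≠ 0, a5 = 0
      have h24 : a2*a4 = 0 := sq_zero (by linear_combination h4)
      have h2z : a2 = 0 := by rcases mul_eq_zero.mp h24 with h | h; exact h; exact absurd h h40
      subst h2z
      have hv : a4 * (a1^2*a4 + a0) = 0 := by linear_combination h3
      have hv' : a1^2*a4 + a0 = 0 := by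
        rcases mul_eq_zero.mp hv with h | h; exact absurd h h40; exact h
      have h0 : a0^3 = 0 := by
        linear_combination -h1 + ((a1^2*a3+a0)*a0) * hv'
      have h0z : a0 = 0 := pow_eq_zero_iff (n := 3) three_ne_zero |>.mp h0
      subst h0z
      have h1z : a1 = 0 := by
        have : a1^2 * a4 = 0 := by linear_combination hv'
        rcases mul_eq_zero.mp this with h | h
        · exact sq_zero h
        · exact absurd h h40
      subst h1z
      exact ⟨by ring, by ring, by ring, by ring, by ring, by ring, by ring, by ring⟩
    · -- a4 ≠ 0, a5 ≠ 0
      have hvw : a4 * (a5 * ((a1^2*a4+a0)*(a3^2*a5+a0) - a2^4*a4*a5)) = 0 := by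
        linear_combination (a3^2*a5^2 + a0*a5) * h3 - (a2^2*a5^2) * h4
      have hvw' : (a1^2*a4+a0)*(a3^2*a5+a0) - a2^4*a4*a5 = 0 := by
        rcases mul_eq_zero.mp hvw with h | h
        · exact absurd h h40
        rcases mul_eq_zero.mp h with h | h
        · exact absurd h h50
        · exact h
      have h0 : a0^3 = 0 := by
        linear_combination -h1 + (a1^2*a3+a0) * hvw'
      have h0z : a0 = 0 := pow_eq_zero_iff (n := 3) three_ne_zero |>.mp h0
      subst h0z
      have h13 : a1*a3 = 0 := sq_zero (by linear_combination h2)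
      rcases mul_eq_zero.mp h13 with h1z | h3z
      · subst h1z
        have h2z : a2 = 0 := by
          have : (a2*a5)^2 = 0 := by linear_combination h3
          rcases mul_eq_zero.mp (sq_zero this) with h | h
          · exact h
          · exact absurd h h50
        subst h2z
        have h3z : a3 = 0 := by
          have : (a3*a5)^2 = 0 := by linear_combination h4
          rcases mul_eq_zero.mp (sq_zero this) with h | h
          · exact h
          · exact absurd h h50
        subst h3z
        exact ⟨by ring, by ring, by ring, by ring, by ring, by ring, by ring, by ring⟩
      · subst h3z
        have h2z : a2 = 0 := by
          have : (a2*a4)^2 = 0 := by linear_combination h4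
          rcases mul_eq_zero.mp (sq_zero this) with h | h
          · exact h
          · exact absurd h h40
        subst h2z
        have h1z : a1 = 0 := by
          have : (a1*a4)^2 = 0 := by linear_combination h3
          rcases mul_eq_zero.mp (sq_zero this) with h | h
          · exact h
          · exact absurd h h40
        subst h1z
        exact ⟨by ring, by ring, by ring, by ring, by ring, by ring, by ring, by ring⟩

/-- In `K[x₀,x₁,…,x₅]` (here `x_k = X k`), the Stanley–Reisner ideal
`I' = (x₁x₃, x₁x₄, x₂x₄, x₂x₅, x₃x₅, x₀x₃, x₀x₄, x₀x₅)` of the cone construction over the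
5-cycle is generated up to radical by the four displayed elements. -/
theorem radical_cone_C5_eq {K : Type*} [Field K] [IsAlgClosed K] :
    (Ideal.span {X 1 * X 3, X 1 * X 4, X 2 * X 4, X 2 * X 5, X 3 * X 5,
        X 0 * X 3, X 0 * X 4, X 0 * X 5} : Ideal (MvPolynomial (Fin 6) K)).radical =
      (Ideal.span
        { X 1 ^ 4 * X 3 ^ 3 * X 4 * X 5 + X 0 * X 1 ^ 2 * X 3 ^ 2 * X 4 * X 5
            + X 0 * X 1 ^ 2 * X 3 ^ 3 * X 5 + X 0 ^ 2 * X 3 ^ 2 * X 5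
            + X 0 * X 1 ^ 4 * X 3 * X 4 + X 0 ^ 2 * X 1 ^ 2 * X 4 + X 0 ^ 2 * X 1 ^ 2 * X 3
            - X 1 ^ 2 * X 2 ^ 4 * X 3 * X 4 * X 5 - X 0 * X 2 ^ 4 * X 4 * X 5,
          X 1 ^ 2 * X 3 ^ 2 + X 0 * X 3,
          X 1 ^ 2 * X 4 ^ 2 + X 2 ^ 2 * X 5 ^ 2 + X 0 * X 4,
          X 2 ^ 2 * X 4 ^ 2 + X 3 ^ 2 * X 5 ^ 2 + X 0 * X 5 } :
        Ideal (MvPolynomial (Fin 6) K)).radical := by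
  rw [← vanishingIdeal_zeroLocus_eq_radical (K := K), ← vanishingIdeal_zeroLocus_eq_radical (K := K)]
  congr 1
  rw [zeroLocus_span, zeroLocus_span]
  ext a
  simp only [Set.mem_setOf_eq, Set.mem_insert_iff, Set.mem_singleton_iff]
  constructor
  · intro h
    have h13 : a 1 * a 3 = 0 := by simpa using h _ (Or.inl rfl)
    have h14 : a 1 * a 4 = 0 := by simpa using h _ (Or.inr (Or.inl rfl))
    have h24 : a 2 * a 4 = 0 := by simpa using h _ (Or.inr (Or.inr (Or.inl rfl)))
    have h25 : a 2 * a 5 = 0 := by simpa using h _ (Or.inr (Or.inr (Or.inr (Or.inl rfl))))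
    have h35 : a 3 * a 5 = 0 := by
      simpa using h _ (Or.inr (Or.inr (Or.inr (Or.inr (Or.inl rfl)))))
    have h03 : a 0 * a 3 = 0 := by
      simpa using h _ (Or.inr (Or.inr (Or.inr (Or.inr (Or.inr (Or.inl rfl))))))
    have h04 : a 0 * a 4 = 0 := by
      simpa using h _ (Or.inr (Or.inr (Or.inr (Or.inr (Or.inr (Or.inr (Or.inl rfl)))))))
    have h05 : a 0 * a 5 = 0 := by
      simpa using h _ (Or.inr (Or.inr (Or.inr (Or.inr (Or.inr (Or.inr (Or.inr rfl)))))))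
    rintro p (rfl | rfl | rfl | rfl) <;>
      simp only [map_add, map_sub, map_mul, map_pow, aeval_X] <;>
      [ (linear_combination (a 1^3*a 3^2*a 4*a 5) * h13
            + (a 1^2*a 3*a 4*a 5 + a 1^2*a 3^2*a 5 + a 0*a 3*a 5 + a 1^4*a 4 + a 0*a 1^2) * h03
            + (a 0*a 1^2 - a 2^4*a 5) * h04 - (a 1^2*a 2^3*a 3*a 5) * h24);
        (linear_combination (a 1*a 3) * h13 + h03);
        (linear_combination (a 1*a 4) * h14 + (a 2*a 5) * h25 + h04);
        (linear_combination (a 2*a 4) * h24 + (a 3*a 5) * h35 + h05)]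
  · intro h
    have h1 := h _ (Or.inl rfl)
    have h2 := h _ (Or.inr (Or.inl rfl))
    have h3 := h _ (Or.inr (Or.inr (Or.inl rfl)))
    have h4 := h _ (Or.inr (Or.inr (Or.inr rfl)))
    simp only [map_add, map_sub, map_mul, map_pow, aeval_X] at h1 h2 h3 h4
    obtain ⟨g13, g14, g24, g25, g35, g03, g04, g05⟩ :=
      key_forward (a 0) (a 1) (a 2) (a 3) (a 4) (a 5)
        (by linear_combination h1) (by linear_combination h2)
        (by linear_combination h3) (by linear_combination h4)
    rintro p (rfl | rfl | rfl | rfl | rfl | rfl | rfl | rfl) <;>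
      simp only [map_mul, aeval_X] <;> assumption
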